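/- arXiv:2510.07584 — 4 statements merged into one kernel-verified Lean document; each statement's English description precedes it below -/
import Mathlib

section
/- Let q be a prime power and m, n, r, d, ℓ₁, ℓ₂ positive integers with m ≥ n > r ≥ d. Let A ⊆ F_q^m and B ⊆ F_q^n be subspaces of dimensions r and d respectively. Let A₁,…,A_{ℓ₁} ∈ F_q^{m×n} be matrices whose column spans all equal A, and B₁,…,B_{ℓ₂} ∈ F_q^{m×n} be matrices whose row spans all equal B. Define D ∈ F_q^{ℓ₂×ℓ₁} by D(i,j) = Trace(A_j · B_iᵀ). Then rank(D) ≤ min(rd, ℓ₁, ℓ₂). -/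
/-!
Write every `A_j` as `P X_j`, with the columns of `P` a basis of `A`, and every `B_i` as `Y_i Q`,
with the rows of `Q` a basis of `B`. Then `Trace(A_j B_iᵀ) = Trace((Y_iᵀ P)(X_j Qᵀ))`, and expanding
this trace over the `r × d` entries factors `D` through `F^{r×d}`.
-/

open Matrix

namespace Matrix

variable {R : Type*} [CommSemiring R] {μ ι κ ν : Type*} [Fintype ι]

theorem exists_eq_basis_mul_of_col_mem {W : Submodule R (μ → R)} (b : Module.Basis ι R W)
    (M : Matrix μ κ R) (hM : ∀ k, Mᵀ k ∈ W) :
    ∃ X : Matrix ι κ R, M = (of fun a => (b a : μ → R))ᵀ * X := by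
  refine ⟨of fun a k => b.repr ⟨Mᵀ k, hM k⟩ a, ?_⟩
  ext e k
  have hk := congrArg (fun v : W => (v : μ → R) e) (b.sum_repr ⟨Mᵀ k, hM k⟩).symm
  simp only [Submodule.coe_sum, Submodule.coe_smul, Finset.sum_apply, Pi.smul_apply,
    smul_eq_mul] at hk
  simpa [Matrix.mul_apply, mul_comm] using hk

theorem exists_eq_mul_basis_of_row_mem {W : Submodule R (ν → R)} (b : Module.Basis ι R W)
    (N : Matrix μ ν R) (hN : ∀ e, N e ∈ W) :
    ∃ Y : Matrix μ ι R, N = Y * of fun a => (b a : ν → R) := by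
  obtain ⟨X, hX⟩ := exists_eq_basis_mul_of_col_mem b Nᵀ hN
  exact ⟨Xᵀ, by rw [← transpose_transpose N, hX, transpose_mul, transpose_transpose]⟩

variable [Fintype κ] [Fintype μ] [Fintype ν]

theorem trace_mul_mul_transpose_eq_sum (P : Matrix μ ι R) (X : Matrix ι ν R)
    (Y : Matrix μ κ R) (Q : Matrix κ ν R) :
    trace (P * X * (Y * Q)ᵀ) = ∑ p : ι × κ, (Yᵀ * P) p.2 p.1 * (X * Qᵀ) p.1 p.2 := by
  rw [transpose_mul, ← Matrix.mul_assoc, trace_mul_cycle, ← Matrix.mul_assoc,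
    Matrix.mul_assoc _ X, trace, Fintype.sum_prod_type_right]
  simp only [diag_apply, Matrix.mul_apply]

theorem rank_le_card_mul_card_of_eq_trace {ι₁ ι₂ : Type*} [Fintype ι₁]
    [StrongRankCondition R] (D : Matrix ι₂ ι₁ R) (P : Matrix μ ι R) (X : ι₁ → Matrix ι ν R)
    (Y : ι₂ → Matrix μ κ R) (Q : Matrix κ ν R)
    (hD : ∀ i j, D i j = trace (P * X j * (Y i * Q)ᵀ)) :
    D.rank ≤ Fintype.card ι * Fintype.card κ := by
  have hfactor : D = (of fun i (p : ι × κ) => ((Y i)ᵀ * P) p.2 p.1) *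
      of fun (p : ι × κ) j => (X j * Qᵀ) p.1 p.2 := by
    ext i j
    rw [hD, trace_mul_mul_transpose_eq_sum, Matrix.mul_apply]
    rfl
  calc D.rank ≤ (of fun i (p : ι × κ) => ((Y i)ᵀ * P) p.2 p.1).rank :=
        hfactor ▸ rank_mul_le_left _ _
    _ ≤ Fintype.card (ι × κ) := rank_le_card_width _
    _ = Fintype.card ι * Fintype.card κ := Fintype.card_prod ι κ

end Matrix

theorem stmt_0_general {F : Type*} [Field F]
    (m n r d ℓ₁ ℓ₂ : ℕ)
    (A : Submodule F (Fin m → F)) (hA : Module.finrank F A = r)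
    (B : Submodule F (Fin n → F)) (hB : Module.finrank F B = d)
    (Amat : Fin ℓ₁ → Matrix (Fin m) (Fin n) F)
    (hAmat : ∀ j, Submodule.span F (Set.range (Amat j)ᵀ) = A)
    (Bmat : Fin ℓ₂ → Matrix (Fin m) (Fin n) F)
    (hBmat : ∀ i, Submodule.span F (Set.range (Bmat i)) = B)
    (D : Matrix (Fin ℓ₂) (Fin ℓ₁) F)
    (hD : ∀ i j, D i j = Matrix.trace (Amat j * (Bmat i)ᵀ)) :
    D.rank ≤ min (r * d) (min ℓ₁ ℓ₂) := by
  let bA := Module.finBasisOfFinrankEq F A hA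
  let bB := Module.finBasisOfFinrankEq F B hB
  choose X hX using fun j => exists_eq_basis_mul_of_col_mem bA (Amat j)
    fun k => hAmat j ▸ Submodule.subset_span ⟨k, rfl⟩
  choose Y hY using fun i => exists_eq_mul_basis_of_row_mem bB (Bmat i)
    fun e => hBmat i ▸ Submodule.subset_span ⟨e, rfl⟩
  have hrd : D.rank ≤ r * d := by
    simpa using rank_le_card_mul_card_of_eq_trace D _ X Y _ fun i j => hX j ▸ hY i ▸ hD i j
  refine le_min hrd (le_min ?_ ?_)
  · simpa using D.rank_le_card_width
  · simpa using D.rank_le_card_height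

theorem stmt_0 {F : Type*} [Field F] [Fintype F]
    (m n r d ℓ₁ ℓ₂ : ℕ) (hm : 0 < m) (hd : 0 < d) (hℓ₁ : 0 < ℓ₁) (hℓ₂ : 0 < ℓ₂)
    (hnm : n ≤ m) (hrn : r < n) (hdr : d ≤ r)
    (A : Submodule F (Fin m → F)) (hA : Module.finrank F A = r)
    (B : Submodule F (Fin n → F)) (hB : Module.finrank F B = d)
    (Amat : Fin ℓ₁ → Matrix (Fin m) (Fin n) F)
    (hAmat : ∀ j, Submodule.span F (Set.range (Amat j)ᵀ) = A)
    (Bmat : Fin ℓ₂ → Matrix (Fin m) (Fin n) F)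
    (hBmat : ∀ i, Submodule.span F (Set.range (Bmat i)) = B)
    (D : Matrix (Fin ℓ₂) (Fin ℓ₁) F)
    (hD : ∀ i j, D i j = Matrix.trace (Amat j * (Bmat i)ᵀ)) :
    D.rank ≤ min (r * d) (min ℓ₁ ℓ₂) :=
  stmt_0_general m n r d ℓ₁ ℓ₂ A hA B hB Amat hAmat Bmat hBmat D hD
end

section
/- Let q be a prime power and let E⁽¹⁾,…,E⁽^{ℓ}⁾ be i.i.d. uniformly random elements of the set { E ∈ F_q^{m×n} : column span of E equals a fixed r-dimensional subspace E ⊆ F_q^m }, with r ≤ n and ℓ ≤ n. Then the probability that E⁽¹⁾,…,E⁽^{ℓ}⁾ are linearly dependent over F_q is O(q^{r(ℓ−n)}). -/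
/-!
Let `q = |F|` and let `S` be the number of matrices whose column span is `E₀`. Composing with an
isomorphism `F^r ≅ E₀` sends every `r × n` matrix with independent rows to such a matrix, so
`S ≥ ∏_{i<r} (q^n - q^i) ≥ q^{r(n-1)}`. A family `(x, E⁽¹⁾, …, E⁽ℓ⁾)` is dependent only if the
`E⁽ʲ⁾` already are or `x` lies in their span, which has at most `q^ℓ` elements; by induction the
number `D` of dependent `ℓ`-families satisfies `D · S · (q - 1) ≤ (q S)^ℓ`. Hence
`D · q^{rn} ≤ 2 q^{r+ℓ-1} S^ℓ ≤ 2 q^{rℓ} S^ℓ`, since `(r - 1)(ℓ - 1) ≥ 0`.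
-/

open Matrix Module Submodule Function

section Dependence

variable {F V A : Type*} [Field F] [Fintype F] [AddCommGroup V] [Module F V]

lemma Nat.card_subtype_or_le {α : Type*} [Finite α] (p q : α → Prop) :
    Nat.card {x // p x ∨ q x} ≤ Nat.card {x // p x} + Nat.card {x // q x} := by
  classical
  have := Fintype.ofFinite α
  simpa only [Nat.card_eq_fintype_card] using Fintype.card_subtype_or p q

lemma card_mem_span_le {ϕ : A → V} (hϕ : Injective ϕ) {ℓ : ℕ} (w : Fin ℓ → V) :
    Nat.card {a : A // ϕ a ∈ span F (Set.range w)} ≤ Fintype.card F ^ ℓ :=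
  have := FiniteDimensional.span_of_finite F (Set.finite_range w)
  have := Module.finite_of_finite F (M := span F (Set.range w))
  calc Nat.card {a : A // ϕ a ∈ span F (Set.range w)}
      ≤ Nat.card (span F (Set.range w)) :=
        Nat.card_le_card_of_injective (fun a => ⟨ϕ a.1, a.2⟩)
          fun a b h => Subtype.ext (hϕ (congrArg Subtype.val h))
    _ = Fintype.card F ^ finrank F (span F (Set.range w)) := by
        rw [Module.natCard_eq_pow_finrank (K := F), Nat.card_eq_fintype_card]
    _ ≤ Fintype.card F ^ ℓ :=
        Nat.pow_le_pow_right Fintype.card_pos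
          ((finrank_range_le_card w).trans (Fintype.card_fin ℓ).le)

lemma card_not_linearIndependent_succ_le [Finite A] {ϕ : A → V} (hϕ : Injective ϕ) (ℓ : ℕ) :
    Nat.card {E : Fin (ℓ + 1) → A // ¬ LinearIndependent F (ϕ ∘ E)}
      ≤ Nat.card {E : Fin ℓ → A // ¬ LinearIndependent F (ϕ ∘ E)} * Nat.card A
        + Fintype.card F ^ ℓ * Nat.card A ^ ℓ := by
  have split : {E : Fin (ℓ + 1) → A // ¬ LinearIndependent F (ϕ ∘ E)} ≃
      {p : (Fin ℓ → A) × A //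
        ¬ LinearIndependent F (ϕ ∘ p.1) ∨ ϕ p.2 ∈ span F (Set.range (ϕ ∘ p.1))} :=
    (Equiv.subtypeEquiv ((Equiv.prodComm _ _).trans (Fin.consEquiv fun _ => A)) fun p => by
      change _ ↔ ¬ LinearIndependent F (ϕ ∘ Fin.cons p.2 p.1)
      rw [Fin.comp_cons, linearIndependent_finCons, not_and_or, not_not]).symm
  have := Fintype.ofFinite A
  rw [Nat.card_congr split]
  refine (Nat.card_subtype_or_le _ _).trans (add_le_add ?_ ?_)
  · rw [Nat.card_congr (Equiv.prodSubtypeFstEquivSubtypeProd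
      (p := fun E : Fin ℓ → A => ¬ LinearIndependent F (ϕ ∘ E))), Nat.card_prod]
  · rw [Nat.card_congr (Equiv.subtypeProdEquivSigmaSubtype fun E a =>
      ϕ a ∈ span F (Set.range (ϕ ∘ E))), Nat.card_sigma]
    calc _ ≤ ∑ _E : Fin ℓ → A, Fintype.card F ^ ℓ :=
          Finset.sum_le_sum fun E _ => card_mem_span_le hϕ (ϕ ∘ E)
      _ = Fintype.card F ^ ℓ * Nat.card A ^ ℓ := by
          rw [Finset.sum_const, Finset.card_univ, ← Nat.card_eq_fintype_card, Nat.card_fun,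
            Nat.card_fin, smul_eq_mul, mul_comm]

lemma card_not_linearIndependent_mul_le [Finite A] {ϕ : A → V} (hϕ : Injective ϕ) (ℓ : ℕ) :
    Nat.card {E : Fin ℓ → A // ¬ LinearIndependent F (ϕ ∘ E)} * Nat.card A * (Fintype.card F - 1)
      ≤ (Fintype.card F * Nat.card A) ^ ℓ := by
  set q := Fintype.card F
  set S := Nat.card A
  induction ℓ with
  | zero => simp
  | succ ℓ ih =>
    calc Nat.card {E : Fin (ℓ + 1) → A // ¬ LinearIndependent F (ϕ ∘ E)} * S * (q - 1)
        ≤ (Nat.card {E : Fin ℓ → A // ¬ LinearIndependent F (ϕ ∘ E)} * S + q ^ ℓ * S ^ ℓ)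
            * S * (q - 1) := by
          gcongr
          exact card_not_linearIndependent_succ_le hϕ ℓ
      _ = Nat.card {E : Fin ℓ → A // ¬ LinearIndependent F (ϕ ∘ E)} * S * (q - 1) * S
            + q ^ ℓ * S ^ (ℓ + 1) * (q - 1) := by ring
      _ ≤ (q * S) ^ ℓ * S + q ^ ℓ * S ^ (ℓ + 1) * (q - 1) := by gcongr
      _ = q ^ ℓ * S ^ (ℓ + 1) * (1 + (q - 1)) := by ring
      _ = (q * S) ^ (ℓ + 1) := by rw [Nat.add_sub_cancel' Fintype.card_pos]; ring

lemma card_not_linearIndependent_mul_pow_le [Finite A] {ϕ : A → V} (hϕ : Injective ϕ)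
    {r n : ℕ} (ℓ : ℕ) (hA : Fintype.card F ^ (r * n) ≤ Fintype.card F ^ r * Nat.card A) :
    Nat.card {E : Fin ℓ → A // ¬ LinearIndependent F (ϕ ∘ E)} * Fintype.card F ^ (r * n)
      ≤ 2 * Fintype.card F ^ (r * ℓ) * Nat.card A ^ ℓ := by
  set q := Fintype.card F
  set S := Nat.card A
  set D := Nat.card {E : Fin ℓ → A // ¬ LinearIndependent F (ϕ ∘ E)}
  have hq : 2 ≤ q := Fintype.one_lt_card
  have hD : D * S * (q - 1) ≤ (q * S) ^ ℓ := card_not_linearIndependent_mul_le hϕ ℓ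
  rcases Nat.eq_zero_or_pos ℓ with rfl | hℓ
  · simp [D]
  rcases Nat.eq_zero_or_pos r with rfl | hr
  · have hD₀ : D ≤ S ^ ℓ := by
      simpa only [Nat.card_fun, Nat.card_fin] using Finite.card_subtype_le (α := Fin ℓ → A) _
    simpa using hD₀.trans (Nat.le_mul_of_pos_left _ two_pos)
  have hexp : r + ℓ ≤ r * ℓ + 1 := by nlinarith
  refine Nat.le_of_mul_le_mul_right ?_ (by omega : 0 < q)
  calc D * q ^ (r * n) * q ≤ D * (q ^ r * S) * (2 * (q - 1)) :=
        Nat.mul_le_mul (Nat.mul_le_mul_left D hA) (by omega)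
    _ = 2 * (q ^ r * (D * S * (q - 1))) := by ring
    _ ≤ 2 * (q ^ r * (q * S) ^ ℓ) := by gcongr
    _ = 2 * q ^ (r + ℓ) * S ^ ℓ := by ring
    _ ≤ 2 * q ^ (r * ℓ + 1) * S ^ ℓ := by gcongr; omega
    _ = 2 * q ^ (r * ℓ) * S ^ ℓ * q := by ring

end Dependence

lemma pow_mul_le_pow_mul_prod_pow_sub_pow {q : ℕ} (hq : 2 ≤ q) {r n : ℕ} (hrn : r ≤ n) :
    q ^ (r * n) ≤ q ^ r * ∏ i : Fin r, (q ^ n - q ^ (i : ℕ)) := by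
  rw [mul_comm r n, pow_mul, ← Fin.prod_const r (q ^ n), ← Fin.prod_const r q,
    ← Finset.prod_mul_distrib]
  refine Finset.prod_le_prod (fun _ _ => Nat.zero_le _) fun i _ => ?_
  have hi : q * q ^ (i : ℕ) ≤ q ^ n := by
    rw [← pow_succ']
    exact Nat.pow_le_pow_right (by omega) (by omega)
  have hq' : 2 * q ^ n ≤ q * q ^ n := Nat.mul_le_mul_right _ hq
  rw [Nat.mul_sub]
  omega

section SpanCols

variable {F : Type*} [Field F]

lemma LinearIndependent.span_cols_eq_top {r : ℕ} {n : Type*} [Fintype n]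
    {U : Matrix (Fin r) n F} (hU : LinearIndependent F U.row) :
    span F (Set.range Uᵀ) = ⊤ :=
  Submodule.eq_top_of_finrank_eq <| by
    change finrank F (span F (Set.range U.col)) = _
    rw [← Matrix.rank_eq_finrank_span_cols, hU.rank_matrix, Fintype.card_fin,
      Module.finrank_fin_fun]

lemma card_linearIndependent_le_card_span_cols [Finite F] {m n : Type*} [Finite m] [Fintype n]
    {r : ℕ} {f : (Fin r → F) →ₗ[F] (m → F)} (hf : Injective f) :
    Nat.card {U : Fin r → n → F // LinearIndependent F U}
      ≤ Nat.card {M : Matrix m n F // span F (Set.range Mᵀ) = LinearMap.range f} := by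
  refine Nat.card_le_card_of_injective
    (fun U => ⟨(of fun j => f (U.1ᵀ j))ᵀ, ?_⟩) fun U U' h => Subtype.ext ?_
  · rw [transpose_transpose, ← Submodule.map_top, ← LinearIndependent.span_cols_eq_top U.2,
      Submodule.map_span]
    exact congrArg (span F) (Set.range_comp f _)
  · have h' := congrArg (fun M => (Subtype.val M)ᵀ) h
    simp only [transpose_transpose, EmbeddingLike.apply_eq_iff_eq] at h'
    funext k j
    exact congrFun (hf (congrFun h' j)) k

lemma pow_mul_le_pow_mul_card_span_cols_eq [Fintype F] {m n r : ℕ} (hrn : r ≤ n)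
    {E₀ : Submodule F (Fin m → F)} (hE₀ : finrank F E₀ = r) :
    Fintype.card F ^ (r * n) ≤ Fintype.card F ^ r
      * Nat.card {M : Matrix (Fin m) (Fin n) F // span F (Set.range Mᵀ) = E₀} := by
  obtain ⟨f, hf, rfl⟩ :
      ∃ f : (Fin r → F) →ₗ[F] (Fin m → F), Injective f ∧ LinearMap.range f = E₀ :=
    let e := LinearEquiv.ofFinrankEq E₀ (Fin r → F) (by simp [hE₀])
    ⟨E₀.subtype ∘ₗ e.symm.toLinearMap, E₀.injective_subtype.comp e.symm.injective, by
      rw [LinearMap.range_comp, LinearEquiv.range, Submodule.map_top, Submodule.range_subtype]⟩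
  calc Fintype.card F ^ (r * n)
      ≤ Fintype.card F ^ r * ∏ i : Fin r, (Fintype.card F ^ n - Fintype.card F ^ (i : ℕ)) :=
        pow_mul_le_pow_mul_prod_pow_sub_pow Fintype.one_lt_card hrn
    _ = Fintype.card F ^ r * Nat.card {U : Fin r → Fin n → F // LinearIndependent F U} := by
        rw [card_linearIndependent (by simpa using hrn), Module.finrank_fin_fun]
    _ ≤ _ := Nat.mul_le_mul_left _ (card_linearIndependent_le_card_span_cols hf)

end SpanCols

/-- If `E⁽¹⁾, …, E⁽ˡ⁾` are i.i.d. uniform matrices with column span equal to a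
fixed `r`-dimensional subspace `E₀ ⊆ F_q^m` (with `r ≤ n`, `ℓ ≤ n`), the
probability that they are linearly dependent is `O(q^{r(ℓ − n)})`,
stated here as: (number of dependent tuples) · q^{rn} ≤ C · q^{rℓ} · (number of tuples). -/
theorem stmt_10 :
    ∃ C : ℝ, 0 < C ∧
      ∀ (F : Type) [Field F] [Fintype F] (m n r ℓ : ℕ),
        r ≤ n → ℓ ≤ n →
        ∀ E₀ : Submodule F (Fin m → F), Module.finrank F E₀ = r →
        (Nat.card {E : Fin ℓ → {M : Matrix (Fin m) (Fin n) F //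
              Submodule.span F (Set.range Mᵀ) = E₀} //
            ¬ LinearIndependent F (fun j => (E j).1)} : ℝ)
            * (Fintype.card F : ℝ) ^ (r * n)
          ≤ C * (Fintype.card F : ℝ) ^ (r * ℓ)
            * (Nat.card (Fin ℓ → {M : Matrix (Fin m) (Fin n) F //
                Submodule.span F (Set.range Mᵀ) = E₀}) : ℝ) := by
  refine ⟨2, two_pos, fun F _ _ m n r ℓ hrn _ E₀ hE₀ => ?_⟩
  have key := card_not_linearIndependent_mul_pow_le Subtype.val_injective ℓ
    (pow_mul_le_pow_mul_card_span_cols_eq (F := F) hrn hE₀)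
  rw [Nat.card_fun, Nat.card_fin]
  exact_mod_cast key
end

section
/- (Correctness of MinRankPKE) Let E ∈ F_q^{ℓ₁×mn} have rows ρ(E⁽ʲ⁾) where the E⁽ʲ⁾ ∈ F_q^{m×n} share a common column span of dimension r, let F ∈ F_q^{ℓ₂×mn} have rows ρ(F⁽ⁱ⁾) where the F⁽ⁱ⁾ share a common row span of dimension d, let G ∈ F_q^{k×mn}, S ∈ F_q^{ℓ₁×k}, T := SG + E, U := FGᵀ, and V := FTᵀ + c for any c ∈ F_q^{ℓ₂×ℓ₁}. Then V − USᵀ = FEᵀ + c and rank(FEᵀ) ≤ rd; hence if c is a codeword of a rank-metric code correcting errors of rank up to ⌊(ℓ₂−κ)/2⌋ and rd ≤ ⌊(ℓ₂−κ)/2⌋, the decoder recovers c. -/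
/-!
Because `T = SG + E`, the public-key term cancels and `V - USᵀ = FEᵀ + c`. Factor
`E⁽ʲ⁾ = P C⁽ʲ⁾` through a basis `P` of the common column span and `F⁽ⁱ⁾ = R⁽ⁱ⁾ Q` through a
basis `Q` of the common row span. Then `⟨F⁽ⁱ⁾, E⁽ʲ⁾⟩ = tr((PᵀR⁽ⁱ⁾)(Q C⁽ʲ⁾ᵀ))`, so `FEᵀ` factors
through `F^{r×d}` and has rank at most `rd`. The decoder therefore strips the error `FEᵀ` off `c`.
-/

open Matrix

/-- Row-major vectorization `ρ : F^{m×n} → F^{mn}`. -/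
def rho {F : Type*} [Field F] {m n : ℕ} (hn : 0 < n)
    (A : Matrix (Fin m) (Fin n) F) : Fin (m * n) → F :=
  fun k => A ⟨(k : ℕ) / n, (Nat.div_lt_iff_lt_mul hn).mpr k.isLt⟩
    ⟨(k : ℕ) % n, Nat.mod_lt _ hn⟩

theorem rho_dotProduct_rho {F : Type*} [Field F] {m n : ℕ} (hn : 0 < n)
    (A B : Matrix (Fin m) (Fin n) F) : rho hn A ⬝ᵥ rho hn B = trace (A * Bᵀ) := by
  calc rho hn A ⬝ᵥ rho hn B = ∑ p : Fin m × Fin n, A p.1 p.2 * B p.1 p.2 :=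
        Fintype.sum_equiv finProdFinEquiv.symm _ _ fun k => rfl
    _ = trace (A * Bᵀ) := by
        simp only [Fintype.sum_prod_type, trace, diag_apply, mul_apply, transpose_apply]

namespace Matrix

variable {F ι m n : Type*} [Field F]

theorem exists_eq_mul_of_row_mem [Fintype n] (W : Submodule F (n → F)) {d : ℕ}
    (hW : Module.finrank F W = d) (A : ι → Matrix m n F) (hA : ∀ i a, A i a ∈ W) :
    ∃ (R : ι → Matrix m (Fin d) F) (Q : Matrix (Fin d) n F), ∀ i, A i = R i * Q := by
  let b := Module.finBasisOfFinrankEq F W hW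
  refine ⟨fun i => of fun a t => b.repr ⟨A i a, hA i a⟩ t, of fun t => (b t : n → F), fun i => ?_⟩
  ext a x
  have h := congrArg (fun w : W => (w : n → F) x) (b.sum_repr ⟨A i a, hA i a⟩)
  simp only [Submodule.coe_sum, Submodule.coe_smul, Finset.sum_apply, Pi.smul_apply,
    smul_eq_mul] at h
  exact h.symm

theorem exists_eq_mul_of_col_mem [Fintype m] (W : Submodule F (m → F)) {r : ℕ}
    (hW : Module.finrank F W = r) (A : ι → Matrix m n F) (hA : ∀ i b, (A i)ᵀ b ∈ W) :
    ∃ (P : Matrix m (Fin r) F) (C : ι → Matrix (Fin r) n F), ∀ i, A i = P * C i := by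
  obtain ⟨R, Q, hRQ⟩ := exists_eq_mul_of_row_mem W hW (fun i => (A i)ᵀ) hA
  exact ⟨Qᵀ, fun i => (R i)ᵀ, fun i => by rw [← transpose_mul, ← hRQ, transpose_transpose]⟩

theorem rank_of_trace_mul_transpose_le {ι₁ ι₂ ρ δ : Type*} [Fintype ι₁] [Fintype m] [Fintype n]
    [Fintype ρ] [Fintype δ] (R : ι₂ → Matrix m δ F) (Q : Matrix δ n F) (P : Matrix m ρ F)
    (C : ι₁ → Matrix ρ n F) :
    (of fun i j => trace (R i * Q * (P * C j)ᵀ)).rank ≤ Fintype.card ρ * Fintype.card δ := by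
  let X : Matrix ι₂ (ρ × δ) F := of fun i st => (Pᵀ * R i) st.1 st.2
  let Y : Matrix ι₁ (ρ × δ) F := of fun j st => (Q * (C j)ᵀ) st.2 st.1
  have hXY : (of fun i j => trace (R i * Q * (P * C j)ᵀ)) = X * Yᵀ := by
    ext i j
    have : trace (R i * Q * (P * C j)ᵀ) = trace (Pᵀ * R i * (Q * (C j)ᵀ)) := by
      rw [transpose_mul, ← Matrix.mul_assoc, trace_mul_comm]
      simp only [Matrix.mul_assoc]
    rw [of_apply, this, trace, mul_apply, Fintype.sum_prod_type]
    simp only [diag_apply, mul_apply, transpose_apply, of_apply, X, Y]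
  calc (of fun i j => trace (R i * Q * (P * C j)ᵀ)).rank = (X * Yᵀ).rank := by rw [hXY]
    _ ≤ X.rank := rank_mul_le_left X Yᵀ
    _ ≤ Fintype.card (ρ × δ) := rank_le_card_width X
    _ = Fintype.card ρ * Fintype.card δ := Fintype.card_prod ρ δ

end Matrix

theorem stmt_13_general {Fq : Type*} [Field Fq]
    (m n r d k ℓ₁ ℓ₂ κ : ℕ) (hn : 0 < n)
    (E : Fin ℓ₁ → Matrix (Fin m) (Fin n) Fq)
    (Esp : Submodule Fq (Fin m → Fq)) (hEsp : Module.finrank Fq Esp = r)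
    (hE : ∀ j, Submodule.span Fq (Set.range (E j)ᵀ) = Esp)
    (Fm : Fin ℓ₂ → Matrix (Fin m) (Fin n) Fq)
    (Fsp : Submodule Fq (Fin n → Fq)) (hFsp : Module.finrank Fq Fsp = d)
    (hF : ∀ i, Submodule.span Fq (Set.range (Fm i)) = Fsp)
    (Emat : Matrix (Fin ℓ₁) (Fin (m * n)) Fq) (hEmat : ∀ j, Emat j = rho hn (E j))
    (Fmat : Matrix (Fin ℓ₂) (Fin (m * n)) Fq) (hFmat : ∀ i, Fmat i = rho hn (Fm i))
    (G : Matrix (Fin k) (Fin (m * n)) Fq) (S : Matrix (Fin ℓ₁) (Fin k) Fq)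
    (c : Matrix (Fin ℓ₂) (Fin ℓ₁) Fq)
    (T : Matrix (Fin ℓ₁) (Fin (m * n)) Fq) (hT : T = S * G + Emat)
    (U : Matrix (Fin ℓ₂) (Fin k) Fq) (hU : U = Fmat * Gᵀ)
    (V : Matrix (Fin ℓ₂) (Fin ℓ₁) Fq) (hV : V = Fmat * Tᵀ + c)
    (Code : Set (Matrix (Fin ℓ₂) (Fin ℓ₁) Fq)) (hc : c ∈ Code)
    (decode : Matrix (Fin ℓ₂) (Fin ℓ₁) Fq → Matrix (Fin ℓ₂) (Fin ℓ₁) Fq)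
    (hdec : ∀ cw ∈ Code, ∀ err : Matrix (Fin ℓ₂) (Fin ℓ₁) Fq,
      err.rank ≤ (ℓ₂ - κ) / 2 → decode (cw + err) = cw)
    (hrd : r * d ≤ (ℓ₂ - κ) / 2) :
    V - U * Sᵀ = Fmat * Ematᵀ + c ∧
    (Fmat * Ematᵀ).rank ≤ r * d ∧
    decode (V - U * Sᵀ) = c := by
  have hsub : V - U * Sᵀ = Fmat * Ematᵀ + c := by
    subst hV hU hT
    rw [transpose_add, transpose_mul, Matrix.mul_add, Matrix.mul_assoc]
    abel
  obtain ⟨P, C, hPC⟩ := exists_eq_mul_of_col_mem Esp hEsp E fun j b =>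
    hE j ▸ Submodule.subset_span ⟨b, rfl⟩
  obtain ⟨R, Q, hRQ⟩ := exists_eq_mul_of_row_mem Fsp hFsp Fm fun i a =>
    hF i ▸ Submodule.subset_span ⟨a, rfl⟩
  have hgram : Fmat * Ematᵀ = of fun i j => trace (R i * Q * (P * C j)ᵀ) := by
    ext i j
    change Fmat i ⬝ᵥ Emat j = trace (R i * Q * (P * C j)ᵀ)
    rw [hFmat, hEmat, rho_dotProduct_rho, hRQ, hPC]
  have hrank : (Fmat * Ematᵀ).rank ≤ r * d := by
    simpa [hgram] using rank_of_trace_mul_transpose_le R Q P C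
  refine ⟨hsub, hrank, ?_⟩
  rw [hsub, add_comm]
  exact hdec c hc _ (hrank.trans hrd)

/-- Correctness of MinRankPKE. -/
theorem stmt_13 {Fq : Type*} [Field Fq] [Fintype Fq]
    (m n r d k ℓ₁ ℓ₂ κ : ℕ) (hn : 0 < n)
    (E : Fin ℓ₁ → Matrix (Fin m) (Fin n) Fq)
    (Esp : Submodule Fq (Fin m → Fq)) (hEsp : Module.finrank Fq Esp = r)
    (hE : ∀ j, Submodule.span Fq (Set.range (E j)ᵀ) = Esp)
    (Fm : Fin ℓ₂ → Matrix (Fin m) (Fin n) Fq)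
    (Fsp : Submodule Fq (Fin n → Fq)) (hFsp : Module.finrank Fq Fsp = d)
    (hF : ∀ i, Submodule.span Fq (Set.range (Fm i)) = Fsp)
    (Emat : Matrix (Fin ℓ₁) (Fin (m * n)) Fq) (hEmat : ∀ j, Emat j = rho hn (E j))
    (Fmat : Matrix (Fin ℓ₂) (Fin (m * n)) Fq) (hFmat : ∀ i, Fmat i = rho hn (Fm i))
    (G : Matrix (Fin k) (Fin (m * n)) Fq) (S : Matrix (Fin ℓ₁) (Fin k) Fq)
    (c : Matrix (Fin ℓ₂) (Fin ℓ₁) Fq)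
    (T : Matrix (Fin ℓ₁) (Fin (m * n)) Fq) (hT : T = S * G + Emat)
    (U : Matrix (Fin ℓ₂) (Fin k) Fq) (hU : U = Fmat * Gᵀ)
    (V : Matrix (Fin ℓ₂) (Fin ℓ₁) Fq) (hV : V = Fmat * Tᵀ + c)
    (Code : Set (Matrix (Fin ℓ₂) (Fin ℓ₁) Fq)) (hc : c ∈ Code)
    (decode : Matrix (Fin ℓ₂) (Fin ℓ₁) Fq → Matrix (Fin ℓ₂) (Fin ℓ₁) Fq)
    (hdec : ∀ cw ∈ Code, ∀ err : Matrix (Fin ℓ₂) (Fin ℓ₁) Fq,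
      err.rank ≤ (ℓ₂ - κ) / 2 → decode (cw + err) = cw)
    (hrd : r * d ≤ (ℓ₂ - κ) / 2) :
    V - U * Sᵀ = Fmat * Ematᵀ + c ∧
    (Fmat * Ematᵀ).rank ≤ r * d ∧
    decode (V - U * Sᵀ) = c :=
  stmt_13_general m n r d k ℓ₁ ℓ₂ κ hn E Esp hEsp hE Fm Fsp hFsp hF Emat hEmat Fmat hFmat G S c T hT
    U hU V hV Code hc decode hdec hrd
end

section
/- Let x ∈ F_2^{mn}, H ∈ F_2^{(mn−k)×mn} uniform, u ∈ F_2^{mn−k} uniform, r ∈ F_2^{mn} arbitrary, and M := H − uᵀ·r (rank-one update). Then M is uniformly distributed; moreover H·xᵀ = M·xᵀ + (x·r)·uᵀ, so that setting s' := M·xᵀ + uᵀ, the pair (M, s') equals (M, H·xᵀ) when x·r = 1 and (M, uniform) when x·r = 0 — with s' uniform and independent of M in the latter case. -/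
open Matrix

theorem Matrix.mulVec_eq_mulVec_sub_vecMulVec_add_smul {m n R : Type*} [Fintype n] [CommRing R]
    (H : Matrix m n R) (u : m → R) (r x : n → R) :
    H *ᵥ x = (H - vecMulVec u r) *ᵥ x + (x ⬝ᵥ r) • u := by
  rw [sub_mulVec, vecMulVec_mulVec, op_smul_eq_smul, dotProduct_comm, sub_add_cancel]

/-- Key algebraic identity in the Goldreich–Levin based search-to-decision
reduction: for `M := H − uᵀ·r` (a rank-one update), the map `H ↦ M` is a
bijection (hence `M` is uniform when `H` is), `H·xᵀ = M·xᵀ + (x·r)·uᵀ`, and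
setting `s' := M·xᵀ + uᵀ`, we get `s' = H·xᵀ` when `x·r = 1`, while when
`x·r = 0` the map `u ↦ s'` is a bijection (hence `s'` is uniform,
independent of `M`). -/
theorem stmt_14 (N K : ℕ) (x r : Fin N → ZMod 2) (u : Fin K → ZMod 2)
    (H M : Matrix (Fin K) (Fin N) (ZMod 2))
    (hM : M = H - Matrix.vecMulVec u r) :
    (Function.Bijective fun H' : Matrix (Fin K) (Fin N) (ZMod 2) =>
        H' - Matrix.vecMulVec u r) ∧
    H.mulVec x = M.mulVec x + (∑ j, x j * r j) • u ∧
    ((∑ j, x j * r j) = 1 → M.mulVec x + u = H.mulVec x) ∧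
    ((∑ j, x j * r j) = 0 →
      Function.Bijective fun u' : Fin K → ZMod 2 => M.mulVec x + u') := by
  have key : H *ᵥ x = M *ᵥ x + (x ⬝ᵥ r) • u :=
    hM ▸ H.mulVec_eq_mulVec_sub_vecMulVec_add_smul u r x
  refine ⟨(Equiv.subRight _).bijective, key, fun hxr => ?_, fun _ => (Equiv.addLeft _).bijective⟩
  rw [key, show x ⬝ᵥ r = 1 from hxr, one_smul]
end
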